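/- In an effect algebra E, an element x is principal if and only if x is sharp and for every t ∈ E with t ≤ x the join t ∨ x' exists in E. That is, P_E = {x ∈ E : x ∈ S_E and ∀ t ≤ x, t ∨ x' exists}. -/
import Mathlib


/-- An effect algebra: a set with a partially defined binary operation `oplus`
(modeled by `Option`), elements `zero` and `one`, satisfying commutativity,
associativity, unique orthosupplementation (`compl`) and the zero-unit law. -/
structure EffectAlgebra (E : Type*) where
  oplus : E → E → Option E
  zero : E
  one : E
  comm : ∀ p q, oplus p q = oplus q p
  assoc : ∀ p q r s t, oplus q r = some s → oplus p s = some t →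
    ∃ u, oplus p q = some u ∧ oplus u r = some t
  compl : E → E
  compl_def : ∀ p, oplus p (compl p) = some one
  compl_unique : ∀ p q, oplus p q = some one → q = compl p
  zero_unit : ∀ p, (oplus one p).isSome → p = zero

namespace EffectAlgebra

variable {E : Type*} (A : EffectAlgebra E)

/-- `p ≤ q` iff there is `r` with `p ⊕ r = q`. -/
def le (p q : E) : Prop := ∃ r, A.oplus p r = some q

/-- `p ⊥ q` iff `p ⊕ q` is defined. -/
def Orth (p q : E) : Prop := (A.oplus p q).isSome

/-- `j` is the join (least upper bound) of `p` and `q`. -/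
def IsJoin (p q j : E) : Prop :=
  A.le p j ∧ A.le q j ∧ ∀ u, A.le p u → A.le q u → A.le j u

/-- `m` is the meet (greatest lower bound) of `p` and `q`. -/
def IsMeet (p q m : E) : Prop :=
  A.le m p ∧ A.le m q ∧ ∀ t, A.le t p → A.le t q → A.le t m

/-- `x` is sharp iff `x ∧ x' = 0`. -/
def Sharp (x : E) : Prop := A.IsMeet x (A.compl x) A.zero

/-- `x` is principal iff `p ⊥ q`, `p ≤ x`, `q ≤ x` imply `p ⊕ q ≤ x`. -/
def Principal (x : E) : Prop :=
  ∀ p q r, A.oplus p q = some r → A.le p x → A.le q x → A.le r x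

end EffectAlgebra

namespace EffectAlgebra

variable {E : Type*} {A : EffectAlgebra E}

lemma my_compl_compl (p : E) : A.compl (A.compl p) = p := by
  have h := A.compl_def p
  rw [A.comm] at h
  exact (A.compl_unique _ _ h).symm

lemma my_compl_inj {p q : E} (h : A.compl p = A.compl q) : p = q := by
  rw [← my_compl_compl (A := A) p, h, my_compl_compl]

lemma my_compl_one : A.compl A.one = A.zero := by
  apply A.zero_unit
  rw [A.compl_def]; rfl

lemma my_one_oplus_zero : A.oplus A.one A.zero = some A.one := by
  rw [← my_compl_one]; exact A.compl_def A.one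

lemma my_zero_oplus (p : E) : A.oplus A.zero p = some p := by
  obtain ⟨u, h1, h2⟩ := A.assoc A.zero p (A.compl p) A.one A.one (A.compl_def p)
    (by rw [A.comm]; exact my_one_oplus_zero)
  have := A.compl_unique u _ h2
  have hpu : p = u := my_compl_inj ((A.compl_unique p _ (A.compl_def p)).symm.trans this)
  rw [h1, hpu]

lemma my_oplus_zero (p : E) : A.oplus p A.zero = some p := by
  rw [A.comm]; exact my_zero_oplus p

lemma my_assoc' {p q r u t : E} (h1 : A.oplus p q = some u) (h2 : A.oplus u r = some t) :
    ∃ s, A.oplus q r = some s ∧ A.oplus p s = some t := by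
  obtain ⟨v, hv1, hv2⟩ := A.assoc r q p u t (by rw [A.comm]; exact h1) (by rw [A.comm]; exact h2)
  exact ⟨v, by rw [A.comm]; exact hv1, by rw [A.comm]; exact hv2⟩

lemma my_cancel {p q r t : E} (h1 : A.oplus p q = some t) (h2 : A.oplus p r = some t) :
    q = r := by
  have ht : A.oplus (A.compl t) t = some A.one := by rw [A.comm]; exact A.compl_def t
  obtain ⟨u1, hu1, hu1'⟩ := A.assoc (A.compl t) p q t A.one h1 ht
  obtain ⟨u2, hu2, hu2'⟩ := A.assoc (A.compl t) p r t A.one h2 ht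
  have : u1 = u2 := by rw [hu1] at hu2; exact Option.some_injective _ hu2
  rw [A.compl_unique u1 q hu1', A.compl_unique u2 r hu2', this]

lemma my_eq_zero_of_oplus_eq_zero {p q : E} (h : A.oplus p q = some A.zero) :
    p = A.zero ∧ q = A.zero := by
  obtain ⟨s, hs1, hs2⟩ := my_assoc' h (my_zero_oplus A.one)
  have hq : q = A.zero := A.zero_unit q (by rw [A.comm, hs1]; rfl)
  subst hq
  rw [my_oplus_zero] at h
  exact ⟨Option.some_injective _ h, rfl⟩

lemma my_le_refl (p : E) : A.le p p := ⟨A.zero, my_oplus_zero p⟩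

lemma my_zero_le (p : E) : A.le A.zero p := ⟨p, my_zero_oplus p⟩

lemma my_le_trans {p q r : E} (h1 : A.le p q) (h2 : A.le q r) : A.le p r := by
  obtain ⟨a, ha⟩ := h1
  obtain ⟨b, hb⟩ := h2
  obtain ⟨s, hs1, hs2⟩ := my_assoc' ha hb
  exact ⟨s, hs2⟩

lemma my_le_antisymm {p q : E} (h1 : A.le p q) (h2 : A.le q p) : p = q := by
  obtain ⟨a, ha⟩ := h1
  obtain ⟨b, hb⟩ := h2
  obtain ⟨s, hs1, hs2⟩ := my_assoc' ha hb
  have hs0 : s = A.zero := my_cancel hs2 (my_oplus_zero p)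
  have ha0 : a = A.zero := (my_eq_zero_of_oplus_eq_zero (hs0 ▸ hs1)).1
  rw [ha0, my_oplus_zero] at ha
  exact Option.some_injective _ ha

lemma my_compl_antitone {p q : E} (h : A.le p q) : A.le (A.compl q) (A.compl p) := by
  obtain ⟨a, ha⟩ := h
  obtain ⟨s, hs1, hs2⟩ := my_assoc' ha (A.compl_def q)
  refine ⟨a, ?_⟩
  rw [A.comm, hs1, A.compl_unique p s hs2]

lemma my_le_compl_of_oplus {p q r : E} (h : A.oplus p q = some r) : A.le q (A.compl p) := by
  obtain ⟨s, hs1, hs2⟩ := my_assoc' h (A.compl_def r)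
  exact ⟨A.compl r, by rw [hs1, A.compl_unique p s hs2]⟩

lemma my_oplus_of_le_compl {p q : E} (h : A.le q (A.compl p)) :
    ∃ r, A.oplus p q = some r := by
  obtain ⟨a, ha⟩ := h
  obtain ⟨u, hu1, hu2⟩ := A.assoc p q a (A.compl p) A.one ha (A.compl_def p)
  exact ⟨u, hu1⟩

/-- Theorem 3.5 of Greechie–Foulis–Pulmannová. -/
lemma my_thm35 {p q d j : E} (hpq : A.oplus p q = some d) (hj : A.IsJoin p q j) :
    ∃ m, A.IsMeet p q m ∧ A.oplus j m = some d := by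
  obtain ⟨hpj, hqj, hlub⟩ := hj
  have hjd : A.le j d := hlub d ⟨q, hpq⟩ ⟨p, by rw [A.comm]; exact hpq⟩
  obtain ⟨m, hm⟩ := hjd
  obtain ⟨b, hb⟩ := hqj
  -- d = q ⊕ (b ⊕ m), also d = q ⊕ p, so p = b ⊕ m, m ≤ p
  obtain ⟨s1, hs1, hs1'⟩ := my_assoc' hb hm
  have hmp : A.le m p := by
    have : s1 = p := my_cancel hs1' (by rw [A.comm]; exact hpq)
    exact ⟨b, by rw [A.comm]; rw [this] at hs1; exact hs1⟩
  obtain ⟨a, ha⟩ := hpj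
  obtain ⟨s2, hs2, hs2'⟩ := my_assoc' ha hm
  have hmq : A.le m q := by
    have : s2 = q := my_cancel hs2' hpq
    exact ⟨a, by rw [A.comm]; rw [this] at hs2; exact hs2⟩
  refine ⟨m, ⟨hmp, hmq, ?_⟩, hm⟩
  intro c hcp hcq
  obtain ⟨p1, hp1⟩ := hcp
  obtain ⟨q1, hq1⟩ := hcq
  -- u := p ⊕ q1 is defined
  have hq1q : A.le q1 q := ⟨c, by rw [A.comm]; exact hq1⟩
  have hq1c : A.le q1 (A.compl p) :=
    my_le_trans hq1q (my_le_compl_of_oplus hpq)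
  obtain ⟨u, hu⟩ := my_oplus_of_le_compl hq1c
  -- q ≤ u : u = p ⊕ q1 = (c ⊕ p1) ⊕ q1 = c ⊕ (p1 ⊕ q1) = c ⊕ (q1 ⊕ p1) = (c ⊕ q1) ⊕ p1 = q ⊕ p1
  obtain ⟨s3, hs3, hs3'⟩ := my_assoc' hp1 hu  -- p1 ⊕ q1 = s3, c ⊕ s3 = u
  obtain ⟨v, hv, hv'⟩ := A.assoc c q1 p1 s3 u (by rw [A.comm]; exact hs3) hs3'
  have hvq : v = q := by rw [hq1] at hv; exact Option.some_injective _ hv.symm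
  have hqu : A.le q u := ⟨p1, hvq ▸ hv'⟩
  have hpu : A.le p u := ⟨q1, hu⟩
  -- c ⊕ u = d : d = p ⊕ q = p ⊕ (c ⊕ q1) = (p ⊕ c) ⊕ q1 = (c ⊕ p) ⊕ q1 = c ⊕ (p ⊕ q1) = c ⊕ u
  obtain ⟨w, hw, hw'⟩ := A.assoc p c q1 q d hq1 hpq  -- p ⊕ c = w, w ⊕ q1 = d
  obtain ⟨s4, hs4, hs4'⟩ := my_assoc' (by rw [A.comm]; exact hw) hw'  -- p ⊕ q1 = s4, c ⊕ s4 = d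
  have hs4u : s4 = u := by rw [hu] at hs4; exact Option.some_injective _ hs4.symm
  have hcu : A.oplus c u = some d := hs4u ▸ hs4'
  -- j ≤ u, u = j ⊕ w2 ; d = c ⊕ (j ⊕ w2) = (c ⊕ j) ⊕ w2 = (j ⊕ c) ⊕ w2 = j ⊕ (c ⊕ w2) ⇒ c ⊕ w2 = m
  obtain ⟨w2, hw2⟩ := hlub u hpu hqu
  obtain ⟨v2, hv2, hv2'⟩ := A.assoc c j w2 u d hw2 hcu  -- c ⊕ j = v2, v2 ⊕ w2 = d
  obtain ⟨s5, hs5, hs5'⟩ := my_assoc' (by rw [A.comm]; exact hv2) hv2'  -- c ⊕ w2 = s5, j ⊕ s5 = d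
  have : s5 = m := my_cancel hs5' hm
  exact ⟨w2, this ▸ hs5⟩

end EffectAlgebra

/-- `x` is principal iff `x` is sharp and for every `t ≤ x` the join `t ∨ x'`
exists. -/
theorem stmt_7 {E : Type*} (A : EffectAlgebra E) (x : E) :
    A.Principal x ↔
      (A.Sharp x ∧ ∀ t, A.le t x → ∃ j, A.IsJoin t (A.compl x) j) := by
  constructor
  · intro hP
    constructor
    · refine ⟨EffectAlgebra.my_zero_le x, EffectAlgebra.my_zero_le _, ?_⟩
      intro t htx htx'
      obtain ⟨s, hs⟩ := htx'
      obtain ⟨u, hu, hu'⟩ := A.assoc x t s (A.compl x) A.one hs (A.compl_def x)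
      have hux : A.le u x := hP x t u hu (EffectAlgebra.my_le_refl x) htx
      have hxu : A.le x u := ⟨t, hu⟩
      have hxeq : u = x := EffectAlgebra.my_le_antisymm hux hxu
      have ht0 : t = A.zero := by
        apply EffectAlgebra.my_cancel (hxeq ▸ hu) (EffectAlgebra.my_oplus_zero x)
      rw [ht0]; exact EffectAlgebra.my_le_refl _
    · intro t htx
      obtain ⟨s, hs⟩ := htx
      have htc : A.le t (A.compl (A.compl x)) := by
        rw [EffectAlgebra.my_compl_compl]; exact ⟨s, hs⟩
      obtain ⟨j, hj⟩ := EffectAlgebra.my_oplus_of_le_compl htc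
      rw [A.comm] at hj  -- hj : t ⊕ x' = some j
      refine ⟨j, ⟨A.compl x, hj⟩, ⟨t, by rw [A.comm]; exact hj⟩, ?_⟩
      intro u htu hxu
      -- s ⊕ j = 1, so j = compl s
      obtain ⟨s2, hs2, hs2'⟩ := EffectAlgebra.my_assoc'
        (by rw [A.comm]; exact hs) (A.compl_def x)  -- t ⊕ x' = s2, s ⊕ s2 = 1
      have hs2j : s2 = j := by rw [hj] at hs2; exact Option.some_injective _ hs2.symm
      have hjcs : j = A.compl s := A.compl_unique s j (hs2j ▸ hs2')
      -- u' ≤ x, u' ⊥ t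
      have hux : A.le (A.compl u) x := by
        have := EffectAlgebra.my_compl_antitone hxu
        rwa [EffectAlgebra.my_compl_compl] at this
      have htu' : A.le t (A.compl (A.compl u)) := by
        rw [EffectAlgebra.my_compl_compl]; exact htu
      obtain ⟨v, hv⟩ := EffectAlgebra.my_oplus_of_le_compl htu'  -- u' ⊕ t = v
      have hvx : A.le v x := hP (A.compl u) t v hv hux ⟨s, hs⟩
      obtain ⟨w, hw⟩ := hvx  -- v ⊕ w = x
      obtain ⟨s3, hs3, hs3'⟩ := EffectAlgebra.my_assoc'
        (by rw [A.comm]; exact hv) hw  -- u' ⊕ w = s3, t ⊕ s3 = x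
      have hs3s : s3 = s := EffectAlgebra.my_cancel hs3' hs
      have hus : A.le (A.compl u) s := ⟨w, hs3s ▸ hs3⟩
      have h4 := EffectAlgebra.my_compl_antitone hus
      rw [EffectAlgebra.my_compl_compl, ← hjcs] at h4
      exact h4
  · intro ⟨hS, hJ⟩
    intro p q r hpq hpx hqx
    obtain ⟨j, hj⟩ := hJ p hpx
    -- p ⊥ x'
    have hpc : A.le p (A.compl (A.compl x)) := by
      rw [EffectAlgebra.my_compl_compl]; exact hpx
    obtain ⟨d, hd⟩ := EffectAlgebra.my_oplus_of_le_compl hpc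
    rw [A.comm] at hd  -- p ⊕ x' = d
    obtain ⟨m, hmMeet, hjm⟩ := EffectAlgebra.my_thm35 hd hj
    -- m = 0
    have hm0 : m = A.zero := by
      apply EffectAlgebra.my_le_antisymm
      · exact hS.2.2 m (EffectAlgebra.my_le_trans hmMeet.1 hpx) hmMeet.2.1
      · exact EffectAlgebra.my_zero_le m
    have hjd : j = d := by
      rw [hm0, EffectAlgebra.my_oplus_zero] at hjm
      exact Option.some_injective _ hjm
    -- x = p ⊕ s ; s ⊕ d = 1 so d = compl s
    obtain ⟨s, hs⟩ := hpx
    obtain ⟨s2, hs2, hs2'⟩ := EffectAlgebra.my_assoc'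
      (by rw [A.comm]; exact hs) (A.compl_def x)  -- p ⊕ x' = s2, s ⊕ s2 = 1
    have hs2d : s2 = d := by rw [hd] at hs2; exact Option.some_injective _ hs2.symm
    have hdcs : d = A.compl s := A.compl_unique s d (hs2d ▸ hs2')
    -- q' is upper bound of p and x'
    have hpq' : A.le p (A.compl q) := by
      have := EffectAlgebra.my_le_compl_of_oplus (by rw [A.comm]; exact hpq)
      exact this
    have hxq' : A.le (A.compl x) (A.compl q) := EffectAlgebra.my_compl_antitone hqx
    have hjq' : A.le j (A.compl q) := hj.2.2 _ hpq' hxq'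
    -- q ≤ s
    have hqs : A.le q s := by
      have h1 := EffectAlgebra.my_compl_antitone hjq'
      rw [EffectAlgebra.my_compl_compl, hjd, hdcs, EffectAlgebra.my_compl_compl] at h1
      exact h1
    obtain ⟨a, ha⟩ := hqs
    obtain ⟨u, hu, hu'⟩ := A.assoc p q a s x ha hs
    have hur : u = r := by rw [hpq] at hu; exact Option.some_injective _ hu.symm
    exact ⟨a, hur ▸ hu'⟩
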